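/- arXiv:2605.11503 — 2 statements merged into one kernel-verified Lean document; each statement's English description precedes it below -/
import Mathlib

section
/- Let G = (P ∪ B, E) be a finite galactic graph, S, T ⊆ P with |S| = |T| = n and with no black hole in the closed neighborhood N[S ∪ T]. Let W ⊆ P ∪ B be either (Rule 1) W = {u, v} for two adjacent black holes u, v, or (Rule 2) the vertex set of a connected component of the induced subgraph G[P ∖ N[S ∪ T]], and let G' be obtained from G by contracting W to a single new black hole b adjacent exactly to the vertices of N(W) ∖ W. If there is a plan for Galactic 1IUMAPF from S to T in G, then there is a plan for Galactic 1IUMAPF from S to T in G'. -/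
open SimpleGraph

/-- A configuration of `n` agents is distance-`r` independent if distinct agents are
at graph distance at least `r + 1`. A plan for `rIUMAPF` of length `ℓ` from `S` to `T`:
the occupied sets at times `0` and `ℓ` are `S` and `T`, every configuration up to time `ℓ`
is distance-`r` independent, and each agent moves within closed neighborhoods. -/
def IsPlan {V : Type*} (G : SimpleGraph V) (r n ℓ : ℕ) (Q : ℕ → Fin n → V)
    (S T : Set V) : Prop :=
  Set.range (Q 0) = S ∧ Set.range (Q ℓ) = T ∧
  (∀ k ≤ ℓ, ∀ i j : Fin n, i ≠ j → r + 1 ≤ G.dist (Q k i) (Q k j)) ∧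
  (∀ k < ℓ, ∀ i : Fin n, Q (k + 1) i = Q k i ∨ G.Adj (Q k i) (Q (k + 1) i))

/-- Galactic distance-`r` independence: no two distinct agents on planets are within
distance `r` in the planet-induced subgraph (`edist = ⊤` when unreachable). -/
def GalIndep {V : Type*} (G : SimpleGraph V) (P : Set V) (r : ℕ) {n : ℕ}
    (Q : Fin n → V) : Prop :=
  ∀ i j : Fin n, i ≠ j → ∀ (hi : Q i ∈ P) (hj : Q j ∈ P),
    (r : ℕ∞) < (G.induce P).edist ⟨Q i, hi⟩ ⟨Q j, hj⟩

/-- A plan for Galactic `rIUMAPF` from `S` to `T`. -/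
def GalPlan {V : Type*} (G : SimpleGraph V) (P : Set V) (r n : ℕ)
    (S T : Set V) : Prop :=
  ∃ (ℓ : ℕ) (Q : ℕ → Fin n → V),
    Set.range (Q 0) = S ∧ Set.range (Q ℓ) = T ∧
    (∀ k ≤ ℓ, GalIndep G P r (Q k)) ∧
    (∀ k < ℓ, ∀ i : Fin n, Q (k + 1) i = Q k i ∨ G.Adj (Q k i) (Q (k + 1) i))

/-- Closed neighborhood `N[X]` of a set of vertices. -/
def nclSet {V : Type*} (G : SimpleGraph V) (X : Set V) : Set V :=
  X ∪ {v | ∃ u ∈ X, G.Adj u v}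

/-- Contraction of a vertex set `W` to a single new vertex (`Sum.inr ()`), which is
adjacent exactly to the vertices of `N(W) ∖ W`; everything else is unchanged. -/
def contractSet {V : Type*} (G : SimpleGraph V) (W : Set V) :
    SimpleGraph ({v : V // v ∉ W} ⊕ Unit) where
  Adj x y :=
    match x, y with
    | Sum.inl u, Sum.inl v => G.Adj u.1 v.1
    | Sum.inl u, Sum.inr _ => ∃ w ∈ W, G.Adj u.1 w
    | Sum.inr _, Sum.inl v => ∃ w ∈ W, G.Adj v.1 w
    | Sum.inr _, Sum.inr _ => False
  symm := by
    constructor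
    rintro (u | u) (v | v) h
    · exact h.symm
    · exact h
    · exact h
    · exact h
  loopless := by
    constructor
    rintro (u | u) h
    · exact G.irrefl h
    · exact h

/-- The planets of the contracted galactic graph: the surviving copies of planets. -/
def contractPlanets {V : Type*} (P W : Set V) : Set ({v : V // v ∉ W} ⊕ Unit) :=
  {x | ∃ u : {v : V // v ∉ W}, u.1 ∈ P ∧ x = Sum.inl u}

/-- A subset of `V ∖ W` viewed inside the contracted vertex set. -/
def liftSet {V : Type*} (W X : Set V) : Set ({v : V // v ∉ W} ⊕ Unit) :=
  {x | ∃ u : {v : V // v ∉ W}, u.1 ∈ X ∧ x = Sum.inl u}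

/-- The infinite grid graph on `ℤ × ℤ`: adjacency is unit `L1` distance. -/
def gridGraph : SimpleGraph (ℤ × ℤ) where
  Adj p q := |p.1 - q.1| + |p.2 - q.2| = 1
  symm := by
    constructor
    intro p q h
    rw [abs_sub_comm q.1, abs_sub_comm q.2]
    exact h
  loopless := by
    constructor
    intro p h
    simp at h

/-! Map every vertex of `W` to the new black hole and every other vertex to its copy, and
apply this map to each configuration of the plan. Neither rule puts a vertex of `S ∪ T` into `W`,
so the start and goal configurations are kept; a step along an edge of `G` becomes a wait or a
step in the contraction; and the planets of the contraction, which induce a copy of `G[P ∖ W]`,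
map homomorphically into `G[P]`, so distances between planets can only grow. -/

namespace SimpleGraph

theorem edist_map_le {V W : Type*} {G : SimpleGraph V} {H : SimpleGraph W} (f : G →g H)
    (u v : V) : H.edist (f u) (f v) ≤ G.edist u v := by
  by_cases hr : G.Reachable u v
  · obtain ⟨p, hp⟩ := hr.exists_walk_length_eq_edist
    rw [← hp, ← p.length_map f]
    exact edist_le _
  · exact edist_eq_top_of_not_reachable hr ▸ le_top

end SimpleGraph

section Contraction

variable {V : Type*} {G : SimpleGraph V} {P W : Set V}

open Classical in
noncomputable def contractMap (W : Set V) (v : V) : {v : V // v ∉ W} ⊕ Unit :=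
  if h : v ∈ W then Sum.inr () else Sum.inl ⟨v, h⟩

theorem contractMap_of_mem {v : V} (h : v ∈ W) : contractMap W v = Sum.inr () :=
  dif_pos h

theorem contractMap_of_notMem {v : V} (h : v ∉ W) : contractMap W v = Sum.inl ⟨v, h⟩ :=
  dif_neg h

theorem image_contractMap {X : Set V} (hX : Disjoint X W) :
    contractMap W '' X = liftSet W X := by
  ext x
  constructor
  · rintro ⟨v, hv, rfl⟩
    have hvW : v ∉ W := hX.notMem_of_mem_left hv
    exact ⟨⟨v, hvW⟩, hv, contractMap_of_notMem hvW⟩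
  · rintro ⟨u, hu, rfl⟩
    exact ⟨u.1, hu, contractMap_of_notMem u.2⟩

theorem contractMap_eq_or_adj {x y : V} (h : G.Adj x y) :
    contractMap W y = contractMap W x ∨
      (contractSet G W).Adj (contractMap W x) (contractMap W y) := by
  by_cases hx : x ∈ W <;> by_cases hy : y ∈ W
  · left
    rw [contractMap_of_mem hx, contractMap_of_mem hy]
  · right
    rw [contractMap_of_mem hx, contractMap_of_notMem hy]
    exact ⟨x, hx, h.symm⟩
  · right
    rw [contractMap_of_notMem hx, contractMap_of_mem hy]
    exact ⟨y, hy, h⟩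
  · right
    rw [contractMap_of_notMem hx, contractMap_of_notMem hy]
    exact h

theorem inr_notMem_contractPlanets (x : Unit) : Sum.inr x ∉ contractPlanets P W := by
  rintro ⟨_, _, ⟨⟩⟩

theorem mem_of_inl_mem_contractPlanets {u : {v : V // v ∉ W}}
    (h : Sum.inl u ∈ contractPlanets P W) : u.1 ∈ P := by
  obtain ⟨v, hv, he⟩ := h
  exact Sum.inl.inj he ▸ hv

variable (G P W) in
def contractPlanetsHom : (contractSet G W).induce (contractPlanets P W) →g G.induce P where
  toFun
    | ⟨Sum.inl u, h⟩ => ⟨u.1, mem_of_inl_mem_contractPlanets h⟩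
    | ⟨Sum.inr x, h⟩ => absurd h (inr_notMem_contractPlanets x)
  map_rel' := by
    rintro ⟨u | x, hu⟩ ⟨v | y, hv⟩ h
    · exact h
    · exact absurd hv (inr_notMem_contractPlanets y)
    · exact absurd hu (inr_notMem_contractPlanets x)
    · exact absurd hu (inr_notMem_contractPlanets x)

variable (G) in
theorem contractPlanetsHom_contractMap {v : V} (hv : contractMap W v ∈ contractPlanets P W) :
    (contractPlanetsHom G P W ⟨contractMap W v, hv⟩).1 = v := by
  by_cases h : v ∈ W
  · exact absurd (contractMap_of_mem h ▸ hv) (inr_notMem_contractPlanets ())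
  · simp only [contractMap_of_notMem h] at hv ⊢
    rfl

theorem GalIndep.contract {r n : ℕ} {Q : Fin n → V} (hQ : GalIndep G P r Q) :
    GalIndep (contractSet G W) (contractPlanets P W) r (contractMap W ∘ Q) := by
  intro i j hij hi hj
  set f := contractPlanetsHom G P W
  have hfi := contractPlanetsHom_contractMap G hi
  have hfj := contractPlanetsHom_contractMap G hj
  calc (r : ℕ∞) < (G.induce P).edist ⟨Q i, hfi ▸ (f _).2⟩ ⟨Q j, hfj ▸ (f _).2⟩ :=
        hQ i j hij _ _
    _ = (G.induce P).edist (f ⟨_, hi⟩) (f ⟨_, hj⟩) :=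
        congrArg₂ _ (Subtype.ext hfi.symm) (Subtype.ext hfj.symm)
    _ ≤ _ := edist_map_le f _ _

theorem GalPlan.contract {r n : ℕ} {S T : Set V} (hS : Disjoint S W) (hT : Disjoint T W)
    (h : GalPlan G P r n S T) :
    GalPlan (contractSet G W) (contractPlanets P W) r n (liftSet W S) (liftSet W T) := by
  obtain ⟨ℓ, Q, hQ0, hQℓ, hindep, hmove⟩ := h
  refine ⟨ℓ, fun k => contractMap W ∘ Q k, ?_, ?_, fun k hk => (hindep k hk).contract,
    fun k hk i => ?_⟩
  · rw [Set.range_comp, hQ0, image_contractMap hS]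
  · rw [Set.range_comp, hQℓ, image_contractMap hT]
  · rcases hmove k hk i with heq | hadj
    · exact Or.inl (congrArg (contractMap W) heq)
    · exact contractMap_eq_or_adj hadj

end Contraction

theorem contract_preserves_galactic_plan_general {V : Type*} (G : SimpleGraph V)
    (P : Set V) (n : ℕ) (S T : Set V) (hSP : S ⊆ P) (hTP : T ⊆ P)
    (W : Set V)
    (hW : (∃ u v : V, u ∉ P ∧ v ∉ P ∧ G.Adj u v ∧ W = {u, v}) ∨
      (∃ c : (G.induce (P \ nclSet G (S ∪ T))).ConnectedComponent,
        W = Subtype.val ''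
          {v | (G.induce (P \ nclSet G (S ∪ T))).connectedComponentMk v = c}))
    (hplan : GalPlan G P 1 n S T) :
    GalPlan (contractSet G W) (contractPlanets P W) 1 n (liftSet W S) (liftSet W T) := by
  have hdisj : Disjoint (S ∪ T) W := by
    rcases hW with ⟨u, v, hu, hv, -, rfl⟩ | ⟨c, rfl⟩
    · refine Set.disjoint_of_subset_left (Set.union_subset hSP hTP) ?_
      simp only [Set.disjoint_insert_right, Set.disjoint_singleton_right]
      exact ⟨hu, hv⟩
    · have hN : S ∪ T ⊆ nclSet G (S ∪ T) := Set.subset_union_left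
      exact Set.disjoint_sdiff_right.mono hN (Subtype.coe_image_subset _ _)
  obtain ⟨hS, hT⟩ := Set.disjoint_union_left.mp hdisj
  exact hplan.contract hS hT

/-- applying either reduction rule (contracting two adjacent black holes,
or contracting a connected component of `G[P ∖ N[S ∪ T]]`) preserves the existence of a
plan for Galactic 1IUMAPF in the forward direction. -/
theorem contract_preserves_galactic_plan {V : Type*} [Fintype V] (G : SimpleGraph V)
    (P : Set V) (n : ℕ) (S T : Set V) (hSP : S ⊆ P) (hTP : T ⊆ P)
    (hS : S.ncard = n) (hT : T.ncard = n)
    (hbh : nclSet G (S ∪ T) ⊆ P)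
    (W : Set V)
    (hW : (∃ u v : V, u ∉ P ∧ v ∉ P ∧ G.Adj u v ∧ W = {u, v}) ∨
      (∃ c : (G.induce (P \ nclSet G (S ∪ T))).ConnectedComponent,
        W = Subtype.val ''
          {v | (G.induce (P \ nclSet G (S ∪ T))).connectedComponentMk v = c}))
    (hplan : GalPlan G P 1 n S T) :
    GalPlan (contractSet G W) (contractPlanets P W) 1 n (liftSet W S) (liftSet W T) :=
  contract_preserves_galactic_plan_general G P n S T hSP hTP W hW hplan
end

section
/- Let P_m be the path graph on m vertices and let k ∈ ℕ with m ≥ 2k+1. Then for every pair of independent sets X, Y of P_m with |X| = |Y| = k, there exists a plan for 1IUMAPF from X to Y in P_m (i.e., a plan using only the vertices of the path). -/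
open SimpleGraph

/-!
List both independent sets from left to right and send the `i`-th agent of `X` straight toward
the `i`-th vertex of `Y`, one step per time unit, stopping on arrival. Consecutive agents of an
independent set on a path are at least two apart, and two agents moving monotonically toward
targets that are also at least two apart never come closer than the smaller of the two gaps.
-/

def moveToward (a b t : ℕ) : ℕ :=
  if a ≤ b then min (a + t) b else max (a - t) b

@[simp]
lemma moveToward_zero (a b : ℕ) : moveToward a b 0 = a := by
  unfold moveToward; split <;> omega

lemma moveToward_of_le (a b : ℕ) {t : ℕ} (ha : a ≤ t) (hb : b ≤ t) : moveToward a b t = b := by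
  unfold moveToward; split <;> omega

lemma moveToward_le_max (a b t : ℕ) : moveToward a b t ≤ max a b := by
  unfold moveToward; split <;> omega

lemma moveToward_succ (a b t : ℕ) :
    moveToward a b (t + 1) = moveToward a b t ∨ moveToward a b t + 1 = moveToward a b (t + 1) ∨
      moveToward a b (t + 1) + 1 = moveToward a b t := by
  unfold moveToward; split <;> omega

lemma moveToward_add_le_moveToward {a a' b b' d : ℕ} (ha : a + d ≤ a') (hb : b + d ≤ b')
    (t : ℕ) : moveToward a b t + d ≤ moveToward a' b' t := by
  unfold moveToward; split <;> split <;> omega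

def IsGapped {k : ℕ} (x : Fin k → ℕ) : Prop :=
  ∀ ⦃i j : Fin k⦄, i < j → x i + 2 ≤ x j

lemma IsGapped.moveToward {k : ℕ} {a b : Fin k → ℕ} (ha : IsGapped a) (hb : IsGapped b)
    (t : ℕ) : IsGapped fun i => moveToward (a i) (b i) t :=
  fun _ _ hij => moveToward_add_le_moveToward (ha hij) (hb hij) t

lemma IsGapped.one_lt_dist_pathGraph {m k : ℕ} {x : Fin k → Fin m}
    (hx : IsGapped fun i => (x i : ℕ)) {i j : Fin k} (hij : i ≠ j) :
    1 < (pathGraph m).dist (x i) (x j) := by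
  wlog hlt : i < j generalizing i j
  · rw [dist_comm]
    exact this hij.symm (hij.lt_or_gt.resolve_left hlt)
  have hgap : (x i : ℕ) + 2 ≤ x j := hx hlt
  refine (pathGraph_preconnected m _ _).one_lt_dist_of_ne_of_not_adj ?_ ?_
  · rintro h
    rw [h] at hgap
    omega
  · rw [pathGraph_adj]
    omega

lemma exists_isGapped_enum_of_pathGraph_indep {m k : ℕ} {X : Set (Fin m)} (hX : X.ncard = k)
    (hind : ∀ u ∈ X, ∀ v ∈ X, u ≠ v → ¬ (pathGraph m).Adj u v) :
    ∃ x : Fin k → Fin m, Set.range x = X ∧ IsGapped fun i => (x i : ℕ) := by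
  classical
  have hcard : X.toFinset.card = k := by rwa [← Set.ncard_eq_toFinset_card']
  set x := X.toFinset.orderEmbOfFin hcard
  have hmem (i : Fin k) : x i ∈ X := Set.mem_toFinset.mp (X.toFinset.orderEmbOfFin_mem hcard i)
  refine ⟨x, by simp [x], fun i j hij => ?_⟩
  have hlt : x i < x j := x.strictMono hij
  have hnadj := hind _ (hmem i) _ (hmem j) hlt.ne
  rw [pathGraph_adj] at hnadj
  rw [Fin.lt_def] at hlt
  show (x i : ℕ) + 2 ≤ x j
  omega

theorem path_oneIUMAPF_feasible_general (m k : ℕ)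
    (X Y : Set (Fin m)) (hX : X.ncard = k) (hY : Y.ncard = k)
    (hXind : ∀ u ∈ X, ∀ v ∈ X, u ≠ v → ¬ (SimpleGraph.pathGraph m).Adj u v)
    (hYind : ∀ u ∈ Y, ∀ v ∈ Y, u ≠ v → ¬ (SimpleGraph.pathGraph m).Adj u v) :
    ∃ (ℓ : ℕ) (Q : ℕ → Fin k → Fin m), IsPlan (SimpleGraph.pathGraph m) 1 k ℓ Q X Y := by
  obtain ⟨x, rfl, hx⟩ := exists_isGapped_enum_of_pathGraph_indep hX hXind
  obtain ⟨y, rfl, hy⟩ := exists_isGapped_enum_of_pathGraph_indep hY hYind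
  let Q : ℕ → Fin k → Fin m := fun t i =>
    ⟨moveToward (x i) (y i) t, (moveToward_le_max _ _ _).trans_lt (max_lt (x i).2 (y i).2)⟩
  have hQ0 : Q 0 = x := funext fun i => Fin.ext (moveToward_zero _ _)
  have hQm : Q m = y := funext fun i => Fin.ext (moveToward_of_le _ _ (x i).2.le (y i).2.le)
  refine ⟨m, Q, by rw [hQ0], by rw [hQm], fun t _ i j hij => ?_, fun t _ i => ?_⟩
  · exact (hx.moveToward hy t).one_lt_dist_pathGraph (x := Q t) hij
  · rcases moveToward_succ (x i) (y i) t with h | h | h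
    · exact Or.inl (Fin.ext h)
    · exact Or.inr (pathGraph_adj.mpr (Or.inl h))
    · exact Or.inr (pathGraph_adj.mpr (Or.inr h))

/-- on the path graph with `m ≥ 2k + 1` vertices, any two independent sets
of size `k` are connected by a plan for 1IUMAPF. -/
theorem path_oneIUMAPF_feasible (m k : ℕ) (hm : 2 * k + 1 ≤ m)
    (X Y : Set (Fin m)) (hX : X.ncard = k) (hY : Y.ncard = k)
    (hXind : ∀ u ∈ X, ∀ v ∈ X, u ≠ v → ¬ (SimpleGraph.pathGraph m).Adj u v)
    (hYind : ∀ u ∈ Y, ∀ v ∈ Y, u ≠ v → ¬ (SimpleGraph.pathGraph m).Adj u v) :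
    ∃ (ℓ : ℕ) (Q : ℕ → Fin k → Fin m), IsPlan (SimpleGraph.pathGraph m) 1 k ℓ Q X Y :=
  path_oneIUMAPF_feasible_general m k X Y hX hY hXind hYind
end
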